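/- arXiv:1203.0857 — 5 statements merged into one kernel-verified Lean document; each statement's English description precedes it below -/
import Mathlib

section
/- Let X be a compact Hausdorff space, A a unital C*-algebra with unit 1, and E a *-subalgebra of C(X,A). Then the constant function 1_X (identically equal to 1) belongs to the uniform closure of E if and only if for every x ∈ X there exists f ∈ E such that f(x) is invertible in A. -/
noncomputable section

/-- Lemma 2.5: for a `*`-subalgebra `E` of `C(X, A)` (`X` compact Hausdorff, `A` a unital
C*-algebra), the constant function `1` lies in the uniform closure of `E` iff for every
`x ∈ X` some `f ∈ E` takes an invertible value at `x`. -/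
theorem one_mem_closure_iff_exists_isUnit
    {X A : Type*} [TopologicalSpace X] [CompactSpace X] [T2Space X] [CStarAlgebra A]
    (E : NonUnitalStarSubalgebra ℂ C(X, A)) :
    (1 : C(X, A)) ∈ closure (E : Set C(X, A)) ↔
      ∀ x : X, ∃ f ∈ E, IsUnit (f x) := by
  constructor
  · intro h1 x
    rw [Metric.mem_closure_iff] at h1
    obtain ⟨f, hfE, hdist⟩ := h1 1 one_pos
    refine ⟨f, hfE, ?_⟩
    have hnorm : ‖(1 : A) - f x‖ < 1 := by
      calc ‖(1 : A) - f x‖ = ‖((1 - f : C(X, A))) x‖ := by simp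
        _ ≤ ‖(1 - f : C(X, A))‖ := ContinuousMap.norm_coe_le_norm _ x
        _ < 1 := by rwa [dist_eq_norm] at hdist
    have := (Units.oneSub ((1 : A) - f x) hnorm).isUnit
    simpa using this
  · intro hx
    obtain hS | hN := subsingleton_or_nontrivial C(X, A)
    · have h10 : (1 : C(X, A)) = 0 := Subsingleton.elim _ _
      rw [h10]
      exact subset_closure E.zero_mem
    -- set up the order structure on `A`
    letI := CStarAlgebra.spectralOrder A
    haveI := CStarAlgebra.spectralOrderedRing A
    haveI hA : Nontrivial A := by
      obtain ⟨f, g, hfg⟩ := hN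
      by_contra h
      rw [not_nontrivial_iff_subsingleton] at h
      exact hfg (ContinuousMap.ext fun x => Subsingleton.elim _ _)
    have hXne : Nonempty X := by
      by_contra h
      rw [not_nonempty_iff] at h
      haveI : Subsingleton C(X, A) := ⟨fun f g => ContinuousMap.ext fun x => h.elim x⟩
      obtain ⟨f, g, hfg⟩ := hN
      exact hfg (Subsingleton.elim f g)
    have hone : (0 : A) ≤ 1 := by simpa using star_mul_self_nonneg (1 : A)
    have hmono : ∀ {r s : ℝ}, r ≤ s → algebraMap ℝ A r ≤ algebraMap ℝ A s := by
      intro r s hrs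
      rw [← sub_nonneg, ← map_sub, Algebra.algebraMap_eq_smul_one]
      exact smul_nonneg (by linarith) hone
    -- Step 1: local positive lower bounds
    have key : ∀ x : X, ∃ g ∈ E, (∀ y, 0 ≤ g y) ∧ ∃ ε > (0 : ℝ), ∃ U : Set X,
        IsOpen U ∧ x ∈ U ∧ ∀ y ∈ U, algebraMap ℝ A ε ≤ g y := by
      intro x
      obtain ⟨f, hfE, hfx⟩ := hx x
      have hgpos : ∀ y, 0 ≤ (star f * f) y := fun y => by
        simpa using star_mul_self_nonneg (f y)
      refine ⟨star f * f, mul_mem (star_mem hfE) hfE, hgpos, ?_⟩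
      have hsa : IsSelfAdjoint ((star f * f) x) := IsSelfAdjoint.of_nonneg (hgpos x)
      have hunit : IsUnit ((star f * f) x) := by
        simpa using hfx.star.mul hfx
      obtain ⟨ε, hε, hle⟩ := (CFC.exists_pos_algebraMap_le_iff (a := (star f * f) x) hsa).mpr
        (fun t ht => lt_of_le_of_ne (spectrum_nonneg_of_nonneg (hgpos x) ht)
          (fun h0 => (spectrum.zero_notMem_iff ℝ).mpr hunit (h0 ▸ ht)))
      refine ⟨ε / 2, by linarith, {y | ‖(star f * f) y - (star f * f) x‖ < ε / 2}, ?_, ?_, ?_⟩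
      · exact isOpen_lt (Continuous.norm ((star f * f).continuous.sub continuous_const))
          continuous_const
      · simp only [Set.mem_setOf_eq, sub_self, norm_zero]
        linarith
      · intro y hy
        have hd : IsSelfAdjoint ((star f * f) y - (star f * f) x) :=
          (IsSelfAdjoint.of_nonneg (hgpos y)).sub hsa
        have h1 : -(algebraMap ℝ A ‖(star f * f) y - (star f * f) x‖) ≤
            (star f * f) y - (star f * f) x := hd.neg_algebraMap_norm_le_self
        have h2 : algebraMap ℝ A ε - algebraMap ℝ A (ε / 2) ≤
            (star f * f) x - algebraMap ℝ A ‖(star f * f) y - (star f * f) x‖ :=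
          sub_le_sub hle (hmono (le_of_lt hy))
        calc algebraMap ℝ A (ε / 2)
            = algebraMap ℝ A ε - algebraMap ℝ A (ε / 2) := by
              rw [← map_sub]; congr 1; ring
          _ ≤ (star f * f) x - algebraMap ℝ A ‖(star f * f) y - (star f * f) x‖ := h2
          _ ≤ (star f * f) x + ((star f * f) y - (star f * f) x) := by
              rw [sub_eq_add_neg]
              exact add_le_add le_rfl h1
          _ = (star f * f) y := by abel
    choose g hgE hgpos ε hεpos U hUopen hxU hlow using key
    -- Step 2: compactness
    have hcover : (Set.univ : Set X) ⊆ ⋃ x, U x := fun y _ => Set.mem_iUnion.mpr ⟨y, hxU y⟩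
    obtain ⟨s, hs⟩ := isCompact_univ.elim_finite_subcover U hUopen hcover
    obtain ⟨x0⟩ := hXne
    have hsne : s.Nonempty := by
      have h0 := hs (Set.mem_univ x0)
      simp only [Set.mem_iUnion, exists_prop] at h0
      obtain ⟨i, his, -⟩ := h0
      exact ⟨i, his⟩
    set h : C(X, A) := ∑ i ∈ s, g i with hh
    have hhE : h ∈ E := sum_mem fun i _ => hgE i
    set δ : ℝ := s.inf' hsne ε with hδ
    have hδpos : 0 < δ := (Finset.lt_inf'_iff hsne).mpr fun i _ => hεpos i
    have hlowh : ∀ y, algebraMap ℝ A δ ≤ h y := by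
      intro y
      have h0 := hs (Set.mem_univ y)
      simp only [Set.mem_iUnion, exists_prop] at h0
      obtain ⟨i, his, hyi⟩ := h0
      calc algebraMap ℝ A δ ≤ algebraMap ℝ A (ε i) := hmono (Finset.inf'_le _ his)
        _ ≤ g i y := hlow i y hyi
        _ ≤ h y := by
            rw [hh]
            simp only [ContinuousMap.coe_sum, Finset.sum_apply]
            exact Finset.single_le_sum (fun j _ => hgpos j y) his
    set M : ℝ := ‖h‖ + δ with hM
    have hMpos : 0 < M := lt_of_lt_of_le hδpos (by simp [hM, norm_nonneg])
    have hδM : δ ≤ M := by simp [hM, norm_nonneg]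
    have huph : ∀ y, h y ≤ algebraMap ℝ A M := by
      intro y
      have h0 : 0 ≤ h y := le_trans (by
        rw [Algebra.algebraMap_eq_smul_one]
        exact smul_nonneg hδpos.le hone) (hlowh y)
      rw [← CStarAlgebra.norm_le_iff_le_algebraMap _ hMpos.le h0]
      calc ‖h y‖ ≤ ‖h‖ := ContinuousMap.norm_coe_le_norm _ y
        _ ≤ M := by simp [hM, hδpos.le]
    -- the rescaled element
    set a : C(X, A) := ((M⁻¹ : ℝ) : ℂ) • h with ha
    have haE : a ∈ E := SMulMemClass.smul_mem _ hhE
    have hay : ∀ y, a y = (M⁻¹ : ℝ) • h y := by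
      intro y
      rw [ha, ContinuousMap.smul_apply, Complex.coe_smul]
    have hsmul_alg : ∀ (r t : ℝ), r • algebraMap ℝ A t = algebraMap ℝ A (r * t) := by
      intro r t
      rw [Algebra.algebraMap_eq_smul_one, Algebra.algebraMap_eq_smul_one, smul_smul]
    have halow : ∀ y, algebraMap ℝ A (δ / M) ≤ a y := by
      intro y
      rw [hay y, div_eq_inv_mul, ← hsmul_alg]
      exact smul_le_smul_of_nonneg_left (hlowh y) (inv_nonneg.mpr hMpos.le)
    have haup : ∀ y, a y ≤ 1 := by
      intro y
      rw [hay y]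
      calc (M⁻¹ : ℝ) • h y ≤ (M⁻¹ : ℝ) • algebraMap ℝ A M :=
            smul_le_smul_of_nonneg_left (huph y) (inv_nonneg.mpr hMpos.le)
        _ = 1 := by rw [hsmul_alg, inv_mul_cancel₀ hMpos.ne', map_one]
    set r : ℝ := 1 - δ / M with hr
    have hr0 : 0 ≤ r := by
      have : δ / M ≤ 1 := (div_le_one hMpos).mpr hδM
      simp [hr]; linarith
    have hr1 : r < 1 := by
      have : 0 < δ / M := div_pos hδpos hMpos
      simp [hr]; linarith
    set b : C(X, A) := 1 - a with hb
    have hbnorm : ∀ y, ‖b y‖ ≤ r := by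
      intro y
      have hby : b y = 1 - a y := by simp [hb]
      have hb0 : 0 ≤ b y := by rw [hby]; exact sub_nonneg.mpr (haup y)
      have hble : b y ≤ algebraMap ℝ A r := by
        rw [hby, hr, map_sub, map_one]
        exact sub_le_sub le_rfl (halow y)
      exact (CStarAlgebra.norm_le_iff_le_algebraMap _ hr0 hb0).mpr hble
    have hbpow : ∀ n : ℕ, ‖b ^ n‖ ≤ r ^ n := by
      intro n
      refine (ContinuousMap.norm_le _ (pow_nonneg hr0 n)).mpr fun y => ?_
      have : (b ^ n) y = (b y) ^ n := by
        simp [ContinuousMap.coe_pow]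
      rw [this]
      calc ‖(b y) ^ n‖ ≤ ‖b y‖ ^ n := norm_pow_le _ n
        _ ≤ r ^ n := pow_le_pow_left₀ (norm_nonneg _) (hbnorm y) n
    -- membership of the iterates
    have hmem : ∀ n : ℕ, (1 : C(X, A)) - b ^ n ∈ E := by
      intro n
      induction n with
      | zero => rw [pow_zero, sub_self]; exact zero_mem E
      | succ n ih =>
        have hid : (1 : C(X, A)) - b ^ (n + 1) =
            ((1 : C(X, A)) - b ^ n) + a - ((1 : C(X, A)) - b ^ n) * a := by
          rw [pow_succ, hb]
          noncomm_ring
        rw [hid]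
        exact sub_mem (add_mem ih haE) (mul_mem ih haE)
    -- conclusion
    have htend : Filter.Tendsto (fun n : ℕ => (1 : C(X, A)) - b ^ n)
        Filter.atTop (nhds 1) := by
      rw [tendsto_iff_norm_sub_tendsto_zero]
      have heq : ∀ n : ℕ, ‖((1 : C(X, A)) - b ^ n) - 1‖ = ‖b ^ n‖ := by
        intro n
        rw [sub_sub_cancel_left, norm_neg]
      refine squeeze_zero (fun n => norm_nonneg _) (fun n => ?_)
        (tendsto_pow_atTop_nhds_zero_of_lt_one hr0 hr1)
      rw [heq n]
      exact hbpow n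
    exact mem_closure_of_tendsto htend (Filter.Eventually.of_forall hmem)

end
end

section
/- Let X be a compact Hausdorff space, A a unital C*-algebra, and E a *-subalgebra of C(X,A) whose uniform closure contains the constant function 1_X. Let x ∈ X and δ > 0. Then for every selfadjoint f ∈ Δ₂(E) there exist selfadjoint g, h in the uniform closure of E such that g(x) = f(x) = h(x) and g − δ·1_X ≤ f ≤ h + δ·1_X (pointwise in the order of selfadjoint elements of A). -/
/-!
Evaluation at `x` is a *-homomorphism, and the image of the closed *-algebra `closure E` under it
contains every selfadjoint element it approximates, so `f x = p x` for a selfadjoint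
`p ∈ closure E`. The proof is a telescoping series of corrections `a ↦ a + φ(b - a)`, where `φ`
truncates the spectrum to `[-r, r]`: such a correction has norm at most `r` and, as soon as
`‖a x - b x‖ ≤ r`, produces exactly the value `b x` at `x`. Correcting two-point approximants of
`f` towards `p` gives, for each `y`, some `w_y ∈ closure E` with `w_y x = f x` and `w_y ≈ f` near
`y`. Finitely many `w_y` cover `X`, and combining them with `a + (b - a)⁺` in place of the
maximum, which a noncommutative algebra lacks, yields `h`. Then `g` comes from `-f`.
-/

noncomputable section

variable {X A : Type*}

/-- `Δ₂(E)`: all `u ∈ C(X, A)` that can be approximated by members of `E` at every pair of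
points of `X`. -/
def Delta2 [TopologicalSpace X] [CompactSpace X] [CStarAlgebra A]
    (E : Set C(X, A)) : Set C(X, A) :=
  {u | ∀ x y : X, ∀ ε : ℝ, 0 < ε → ∃ v ∈ E, ‖v x - u x‖ < ε ∧ ‖v y - u y‖ < ε}

open scoped CStarAlgebra ComplexStarModule

def truncAt (r t : ℝ) : ℝ := max (-r) (min t r)

lemma continuous_truncAt (r : ℝ) : Continuous (truncAt r) := by
  unfold truncAt
  fun_prop

lemma truncAt_zero {r : ℝ} (hr : 0 ≤ r) : truncAt r 0 = 0 := by
  simp [truncAt, hr]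

lemma abs_truncAt_le {r : ℝ} (hr : 0 ≤ r) (t : ℝ) : |truncAt r t| ≤ r :=
  abs_le.2 ⟨le_max_left _ _, max_le (by linarith) (min_le_right t r)⟩

lemma truncAt_of_abs_le {r t : ℝ} (h : |t| ≤ r) : truncAt r t = t := by
  rw [abs_le] at h
  simp [truncAt, h.1, h.2]

section StarHom

variable {B C F : Type*} [NonUnitalCStarAlgebra B] [NonUnitalCStarAlgebra C]
  [FunLike F B C] [NonUnitalAlgHomClass F ℂ B C] [StarHomClass F B C]

lemma norm_cfcₙ_truncAt_le (a : B) {r : ℝ} (hr : 0 ≤ r) : ‖cfcₙ (truncAt r) a‖ ≤ r :=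
  norm_cfcₙ_le fun t _ => by simpa using abs_truncAt_le hr t

lemma cfcₙ_truncAt_eq_self {a : B} (ha : IsSelfAdjoint a) {r : ℝ} (h : ‖a‖ ≤ r) :
    cfcₙ (truncAt r) a = a := by
  have hspec : ∀ t ∈ quasispectrum ℝ a, |t| ≤ r := fun t ht => by
    have := norm_apply_le_norm_cfcₙ (fun s : ℝ => s) a ht
    rw [cfcₙ_id' ℝ a] at this
    exact this.trans h
  rw [cfcₙ_congr fun t ht => truncAt_of_abs_le (hspec t ht), cfcₙ_id' ℝ a]

def stepToward (r : ℝ) (a b : B) : B := a + cfcₙ (truncAt r) (b - a)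

lemma norm_stepToward_sub_le {r : ℝ} (hr : 0 ≤ r) (a b : B) : ‖stepToward r a b - a‖ ≤ r := by
  simpa [stepToward] using norm_cfcₙ_truncAt_le (b - a) hr

lemma IsSelfAdjoint.stepToward {a : B} (ha : IsSelfAdjoint a) (r : ℝ) (b : B) :
    IsSelfAdjoint (stepToward r a b) :=
  ha.add (cfcₙ_predicate _ _)

lemma stepToward_mem {S : NonUnitalStarSubalgebra ℂ B} (hS : IsClosed (S : Set B)) (r : ℝ)
    {a b : B} (ha : a ∈ S) (hb : b ∈ S) : stepToward r a b ∈ S :=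
  add_mem ha (cfcₙ_mem (𝕜' := ℂ) (hs := hS) _ (sub_mem hb ha))

lemma map_stepToward (ψ : F) {a b : B} (ha : IsSelfAdjoint a) (hb : IsSelfAdjoint b) {r : ℝ}
    (h : ‖ψ b - ψ a‖ ≤ r) : ψ (stepToward r a b) = ψ b := by
  have hr : 0 ≤ r := (norm_nonneg _).trans h
  rw [stepToward, map_add, NonUnitalStarAlgHomClass.map_cfcₙ ψ (truncAt r) (b - a)
    (continuous_truncAt r).continuousOn (truncAt_zero hr) (ha := hb.sub ha), map_sub,
    cfcₙ_truncAt_eq_self ((hb.map ψ).sub (ha.map ψ)) h, add_sub_cancel]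

theorem exists_isSelfAdjoint_map_eq (ψ : F) {S : NonUnitalStarSubalgebra ℂ B}
    (hS : IsClosed (S : Set B)) {c : C}
    (hc : ∀ ε > 0, ∃ s ∈ S, IsSelfAdjoint s ∧ ‖ψ s - c‖ < ε) :
    ∃ p ∈ S, IsSelfAdjoint p ∧ ψ p = c := by
  choose s hsS hsa hsc using fun k : ℕ => hc ((2⁻¹ : ℝ) ^ k) (by positivity)
  let r : ℕ → ℝ := fun k => 2 * (2⁻¹ : ℝ) ^ k
  let p : ℕ → B := fun k => Nat.rec (s 0) (fun k q => stepToward (r k) q (s (k + 1))) k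
  have hp : ∀ k, p k ∈ S ∧ IsSelfAdjoint (p k) ∧ ψ (p k) = ψ (s k) := by
    intro k
    induction k with
    | zero => exact ⟨hsS 0, hsa 0, rfl⟩
    | succ k ih =>
      obtain ⟨hpS, hpsa, hpψ⟩ := ih
      have hnear : ‖ψ (s (k + 1)) - ψ (p k)‖ ≤ r k := by
        rw [hpψ, ← sub_sub_sub_cancel_right _ _ c]
        have hsucc := hsc (k + 1)
        have hk := hsc k
        rw [pow_succ] at hsucc
        calc _ ≤ ‖ψ (s (k + 1)) - c‖ + ‖ψ (s k) - c‖ := norm_sub_le _ _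
          _ ≤ 2 * (2⁻¹ : ℝ) ^ k := by linarith [pow_pos (by norm_num : (0 : ℝ) < 2⁻¹) k]
      exact ⟨stepToward_mem hS _ hpS (hsS _), hpsa.stepToward _ _,
        map_stepToward ψ hpsa (hsa _) hnear⟩
  have hcauchy : CauchySeq p := cauchySeq_of_le_geometric 2⁻¹ 2 (by norm_num) fun k => by
    rw [dist_comm, dist_eq_norm]
    exact norm_stepToward_sub_le (by positivity) _ _
  obtain ⟨P, hP⟩ := cauchySeq_tendsto_of_complete hcauchy
  have hψs : Filter.Tendsto (fun k => ψ (s k)) Filter.atTop (nhds c) := by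
    rw [tendsto_iff_norm_sub_tendsto_zero]
    exact squeeze_zero (fun k => norm_nonneg _) (fun k => (hsc k).le)
      (tendsto_pow_atTop_nhds_zero_of_lt_one (by norm_num) (by norm_num))
  refine ⟨P, hS.mem_of_tendsto hP (.of_forall fun k => (hp k).1),
    (isClosed_eq continuous_star continuous_id).mem_of_tendsto hP (.of_forall (hp · |>.2.1)),
    tendsto_nhds_unique (((map_continuous ψ).tendsto P).comp hP) ?_⟩
  simpa only [Function.comp_def, (hp _).2.2] using hψs

lemma map_posPart (ψ : F) {a : B} (ha : IsSelfAdjoint a) : ψ a⁺ = (ψ a)⁺ := by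
  simp only [CFC.posPart_def]
  exact NonUnitalStarAlgHomClass.map_cfcₙ ψ _ a (hφa := ha.map ψ)

end StarHom

lemma norm_realPart_sub_le {C : Type*} [NonUnitalCStarAlgebra C] (w : C) {c : C}
    (hc : IsSelfAdjoint c) : ‖(ℜ w : C) - c‖ ≤ ‖w - c‖ :=
  calc ‖(ℜ w : C) - c‖ = ‖(ℜ (w - c) : C)‖ := by
        rw [map_sub, AddSubgroup.coe_sub, hc.coe_realPart]
    _ ≤ ‖w - c‖ := realPart.norm_le (w - c)

section Order

variable {B : Type*} [NonUnitalCStarAlgebra B] [PartialOrder B] [StarOrderedRing B]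

lemma le_add_posPart_sub_left (a b : B) : a ≤ a + (b - a)⁺ :=
  le_add_of_nonneg_right (CFC.posPart_nonneg _)

lemma le_add_posPart_sub_right {a b : B} (h : IsSelfAdjoint (b - a)) : b ≤ a + (b - a)⁺ :=
  calc b = a + (b - a) := (add_sub_cancel a b).symm
    _ ≤ a + (b - a)⁺ := add_le_add_right (CFC.le_posPart h) a

end Order

lemma le_add_smul_one_of_norm_sub_le {A : Type*} [CStarAlgebra A] [PartialOrder A]
    [StarOrderedRing A] {a b : A} (hab : IsSelfAdjoint (a - b)) {r : ℝ} (h : ‖a - b‖ ≤ r) :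
    a ≤ b + r • 1 := by
  rw [← Algebra.algebraMap_eq_smul_one, ← sub_le_iff_le_add']
  exact hab.le_algebraMap_norm_self.trans (algebraMap_mono A h)

def ContinuousMap.evalNonUnitalStarAlgHom [TopologicalSpace X] [NonUnitalCStarAlgebra A]
    (x : X) : C(X, A) →⋆ₙₐ[ℂ] A where
  toFun f := f x
  map_smul' _ _ := rfl
  map_zero' := rfl
  map_add' _ _ := rfl
  map_mul' _ _ := rfl
  map_star' _ := rfl

lemma IsSelfAdjoint.continuousMap_apply [TopologicalSpace X] [NonUnitalCStarAlgebra A]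
    {f : C(X, A)} (hf : IsSelfAdjoint f) (z : X) : IsSelfAdjoint (f z) :=
  hf.map (ContinuousMap.evalNonUnitalStarAlgHom z)

section Pointwise

variable [TopologicalSpace X] [CompactSpace X] [CStarAlgebra A]

lemma exists_isSelfAdjoint_of_mem_delta2 {E : NonUnitalStarSubalgebra ℂ C(X, A)} {f : C(X, A)}
    (hf : f ∈ Delta2 (E : Set C(X, A))) (hfsa : IsSelfAdjoint f) (y z : X) {ε : ℝ}
    (hε : 0 < ε) : ∃ v ∈ E, IsSelfAdjoint v ∧ ‖v y - f y‖ < ε ∧ ‖v z - f z‖ < ε := by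
  obtain ⟨v, hvE, hvy, hvz⟩ := hf y z ε hε
  have hre : ∀ t, (ℜ v : C(X, A)) t = ℜ (v t) := fun t =>
    map_realPart (ContinuousMap.evalNonUnitalStarAlgHom t) v
  refine ⟨ℜ v, ?_, (ℜ v).2, ?_, ?_⟩
  · rw [realPart_apply_coe, ← Complex.coe_smul]
    exact SMulMemClass.smul_mem _ (add_mem hvE (star_mem hvE))
  · exact (hre y ▸ norm_realPart_sub_le _ (hfsa.continuousMap_apply y)).trans_lt hvy
  · exact (hre z ▸ norm_realPart_sub_le _ (hfsa.continuousMap_apply z)).trans_lt hvz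

lemma neg_mem_delta2 {E : NonUnitalStarSubalgebra ℂ C(X, A)} {f : C(X, A)}
    (hf : f ∈ Delta2 (E : Set C(X, A))) : -f ∈ Delta2 (E : Set C(X, A)) := by
  intro y z ε hε
  obtain ⟨v, hvE, hvy, hvz⟩ := hf y z ε hε
  refine ⟨-v, neg_mem hvE, ?_, ?_⟩ <;>
    rwa [ContinuousMap.neg_apply, ContinuousMap.neg_apply, neg_sub_neg, norm_sub_rev]

theorem exists_apply_eq_norm_sub_lt_of_mem_delta2 {E : NonUnitalStarSubalgebra ℂ C(X, A)}
    {f : C(X, A)} (hf : f ∈ Delta2 (E : Set C(X, A))) (hfsa : IsSelfAdjoint f) (x y : X)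
    {ε : ℝ} (hε : 0 < ε) :
    ∃ w ∈ E.topologicalClosure, IsSelfAdjoint w ∧ w x = f x ∧ ‖w y - f y‖ < ε := by
  have hS := E.isClosed_topologicalClosure
  have hES := E.le_topologicalClosure
  obtain ⟨p, hpS, hpsa, hpx : p x = f x⟩ := exists_isSelfAdjoint_map_eq
    (ContinuousMap.evalNonUnitalStarAlgHom x) hS (c := f x) fun ε hε => by
      obtain ⟨v, hvE, hvsa, hvx, -⟩ := exists_isSelfAdjoint_of_mem_delta2 hf hfsa x x hε
      exact ⟨v, hES hvE, hvsa, hvx⟩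
  obtain ⟨v, hvE, hvsa, hvx, hvy⟩ := exists_isSelfAdjoint_of_mem_delta2 hf hfsa x y (half_pos hε)
  have hpv : ‖p x - v x‖ ≤ ε / 2 := by
    rw [hpx, norm_sub_rev]
    exact hvx.le
  refine ⟨stepToward (ε / 2) v p, stepToward_mem hS _ (hES hvE) hpS, hvsa.stepToward _ _,
    (map_stepToward (ContinuousMap.evalNonUnitalStarAlgHom x) hvsa hpsa hpv).trans hpx, ?_⟩
  calc ‖stepToward (ε / 2) v p y - f y‖
      ≤ ‖(stepToward (ε / 2) v p - v) y‖ + ‖v y - f y‖ := by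
        rw [ContinuousMap.sub_apply]
        exact norm_sub_le_norm_sub_add_norm_sub _ _ _
    _ < ε / 2 + ε / 2 := add_lt_add_of_le_of_lt ((ContinuousMap.norm_coe_le_norm _ y).trans
        (norm_stepToward_sub_le (half_pos hε).le _ _)) hvy
    _ = ε := add_halves ε

variable [PartialOrder A] [StarOrderedRing A]

theorem exists_upper_bound_apply_eq {S : NonUnitalStarSubalgebra ℂ C(X, A)}
    (hS : IsClosed (S : Set C(X, A))) {x : X} {c : A} {ι : Type*} {t : Finset ι}
    (ht : t.Nonempty) {w : ι → C(X, A)}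
    (hw : ∀ i ∈ t, w i ∈ S ∧ IsSelfAdjoint (w i) ∧ w i x = c) :
    ∃ F ∈ S, IsSelfAdjoint F ∧ F x = c ∧ ∀ i ∈ t, w i ≤ F := by
  induction ht using Finset.Nonempty.cons_induction with
  | singleton i =>
    obtain ⟨hiS, hisa, hix⟩ := hw i (Finset.mem_singleton_self i)
    exact ⟨w i, hiS, hisa, hix, fun j hj => Finset.mem_singleton.1 hj ▸ le_rfl⟩
  | cons i t hit ht ih =>
    obtain ⟨F, hFS, hFsa, hFx, hFw⟩ := ih fun j hj => hw j (Finset.mem_cons_of_mem hj)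
    obtain ⟨hiS, hisa, hix⟩ := hw i (Finset.mem_cons_self i t)
    have hsa : IsSelfAdjoint (w i - F) := hisa.sub hFsa
    have happly : ∀ z, (F + (w i - F)⁺) z = F z + (w i z - F z)⁺ := fun z =>
      congrArg (F z + ·) (map_posPart (ContinuousMap.evalNonUnitalStarAlgHom z) hsa)
    refine ⟨F + (w i - F)⁺, add_mem hFS (cfcₙ_mem (𝕜' := ℂ) (hs := hS) _ (sub_mem hiS hFS)),
      hFsa.add (cfcₙ_predicate _ _), ?_, fun j hj => ?_⟩
    · rw [happly, hix, hFx, sub_self, CFC.posPart_zero, add_zero]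
    rcases Finset.mem_cons.1 hj with rfl | hj
    · exact ContinuousMap.le_def.2 fun z =>
        happly z ▸ le_add_posPart_sub_right (hsa.continuousMap_apply z)
    · exact (hFw j hj).trans <| ContinuousMap.le_def.2 fun z =>
        happly z ▸ le_add_posPart_sub_left _ _

theorem exists_selfAdjoint_apply_eq_le_add_of_mem_delta2
    (E : NonUnitalStarSubalgebra ℂ C(X, A)) (x : X) {δ : ℝ} (hδ : 0 < δ)
    {f : C(X, A)} (hf : f ∈ Delta2 (E : Set C(X, A))) (hfsa : IsSelfAdjoint f) :
    ∃ h ∈ closure (E : Set C(X, A)), IsSelfAdjoint h ∧ h x = f x ∧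
      ∀ z, f z ≤ h z + δ • (1 : A) := by
  have hw : ∀ y, ∃ w ∈ E.topologicalClosure, IsSelfAdjoint w ∧ w x = f x ∧ ‖w y - f y‖ < δ :=
    fun y => exists_apply_eq_norm_sub_lt_of_mem_delta2 hf hfsa x y hδ
  choose w hwS hwsa hwx hwy using hw
  obtain ⟨t, ht⟩ := isCompact_univ.elim_finite_subcover (fun y => {z | ‖w y z - f z‖ < δ})
    (fun y => isOpen_lt (by fun_prop) continuous_const) fun z _ => Set.mem_iUnion.2 ⟨z, hwy z⟩
  have hcover : ∀ z, ∃ y ∈ t, ‖w y z - f z‖ < δ := fun z => by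
    simpa using ht (Set.mem_univ z)
  obtain ⟨F, hFS, hFsa, hFx, hFw⟩ := exists_upper_bound_apply_eq E.isClosed_topologicalClosure
    (let ⟨y, hy, _⟩ := hcover x; ⟨y, hy⟩) fun y _ => ⟨hwS y, hwsa y, hwx y⟩
  refine ⟨F, E.topologicalClosure_coe ▸ hFS, hFsa, hFx, fun z => ?_⟩
  obtain ⟨y, hyt, hyz⟩ := hcover z
  calc f z ≤ w y z + δ • (1 : A) :=
        le_add_smul_one_of_norm_sub_le
          ((hfsa.continuousMap_apply z).sub ((hwsa y).continuousMap_apply z))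
          ((norm_sub_rev _ _).trans_le hyz.le)
    _ ≤ F z + δ • (1 : A) := add_le_add_left (ContinuousMap.le_def.1 (hFw y hyt) z) _

end Pointwise

theorem exists_selfAdjoint_approx_le_of_mem_delta2_general
    [TopologicalSpace X] [CompactSpace X] [CStarAlgebra A]
    [PartialOrder A] [StarOrderedRing A]
    (E : NonUnitalStarSubalgebra ℂ C(X, A))
    (x : X) (δ : ℝ) (hδ : 0 < δ)
    (f : C(X, A)) (hf : f ∈ Delta2 (E : Set C(X, A))) (hfsa : IsSelfAdjoint f) :
    ∃ g ∈ closure (E : Set C(X, A)), ∃ h ∈ closure (E : Set C(X, A)),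
      IsSelfAdjoint g ∧ IsSelfAdjoint h ∧
      g x = f x ∧ h x = f x ∧
      (∀ z : X, g z - δ • (1 : A) ≤ f z) ∧ (∀ z : X, f z ≤ h z + δ • (1 : A)) := by
  obtain ⟨h, hhE, hhsa, hhx, hfh⟩ :=
    exists_selfAdjoint_apply_eq_le_add_of_mem_delta2 E x hδ hf hfsa
  obtain ⟨g, hgE, hgsa, hgx, hgf⟩ :=
    exists_selfAdjoint_apply_eq_le_add_of_mem_delta2 E x hδ (neg_mem_delta2 hf) hfsa.neg
  refine ⟨-g, map_mem_closure continuous_neg hgE fun _ => neg_mem, h, hhE, hgsa.neg, hhsa,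
    ?_, hhx, fun z => ?_, hfh⟩
  · rw [ContinuousMap.neg_apply, hgx, ContinuousMap.neg_apply, neg_neg]
  · have := neg_le_neg (hgf z)
    rwa [ContinuousMap.neg_apply, neg_neg, neg_add'] at this

/-- Lemma 2.6: if `1_X` belongs to the uniform closure of `E`, then every selfadjoint
`f ∈ Δ₂(E)` admits selfadjoint `g, h` in the closure of `E` with `g x = f x = h x` and
`g - δ·1_X ≤ f ≤ h + δ·1_X`. -/
theorem exists_selfAdjoint_approx_le_of_mem_delta2
    [TopologicalSpace X] [CompactSpace X] [T2Space X] [CStarAlgebra A]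
    [PartialOrder A] [StarOrderedRing A]
    (E : NonUnitalStarSubalgebra ℂ C(X, A))
    (h1 : (1 : C(X, A)) ∈ closure (E : Set C(X, A)))
    (x : X) (δ : ℝ) (hδ : 0 < δ)
    (f : C(X, A)) (hf : f ∈ Delta2 (E : Set C(X, A))) (hfsa : IsSelfAdjoint f) :
    ∃ g ∈ closure (E : Set C(X, A)), ∃ h ∈ closure (E : Set C(X, A)),
      IsSelfAdjoint g ∧ IsSelfAdjoint h ∧
      g x = f x ∧ h x = f x ∧
      (∀ z : X, g z - δ • (1 : A) ≤ f z) ∧ (∀ z : X, f z ≤ h z + δ • (1 : A)) :=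
  exists_selfAdjoint_approx_le_of_mem_delta2_general E x δ hδ f hf hfsa

end
end

section
/- Let X be a compact Hausdorff space, A a unital C*-algebra, and E a *-subalgebra of C(X,A). Suppose there is a closed equivalence relation R on X such that M(f(x)) = M(f(y)) for each selfadjoint f ∈ E whenever (x,y) ∈ R. Let π : X → X/R denote the canonical projection. If f is a selfadjoint element of the uniform closure of E, a and b are real numbers, and U = {x ∈ X : a·1 < f(x) < b·1}, then π⁻¹(π(U)) = U and π(U) is open in the quotient space X/R. -/
/-!
For a selfadjoint `c`, `a • 1 < c < b • 1` (in the strict sense of `CstarLT`) says exactly that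
the spectrum of `c` lies in the open interval `(a, b)`, i.e. `M(-c) < -a` and `M(c) < b`.
Since `M` is `1`-Lipschitz on selfadjoint elements, `x ↦ M(f x)` and `x ↦ M(-f x)` are
continuous, so `U` is open; and the `R`-invariance of `M ∘ f` passes from `E` to its closure
(through real parts), so `U` is `R`-saturated. An open saturated set has open image in `X / R`.
-/

open scoped ComplexStarModule

noncomputable section

variable {X A : Type*}

def Mspec [CStarAlgebra A] (a : A) : ℝ := sSup (spectrum ℝ a)

def CstarLT [CStarAlgebra A] [PartialOrder A] [StarOrderedRing A] (a b : A) : Prop :=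
  a ≤ b ∧ IsUnit (b - a)

lemma isUnit_smul_one_sub_iff {𝕜 B : Type*} [CommSemiring 𝕜] [Ring B] [Algebra 𝕜 B] (r : 𝕜)
    (c : B) : IsUnit (r • (1 : B) - c) ↔ r ∉ spectrum 𝕜 c := by
  rw [spectrum.mem_iff, not_not, Algebra.algebraMap_eq_smul_one]

section Spectrum

variable [CStarAlgebra A] {c d : A}

lemma le_mspec_of_mem_spectrum {r : ℝ} (hr : r ∈ spectrum ℝ c) : r ≤ Mspec c :=
  le_csSup (spectrum.isBounded c).bddAbove hr

lemma mspec_mem_spectrum [Nontrivial A] (hc : IsSelfAdjoint c) : Mspec c ∈ spectrum ℝ c :=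
  (spectrum.isCompact c).sSup_mem (ContinuousFunctionalCalculus.spectrum_nonempty c hc)

variable [PartialOrder A] [StarOrderedRing A] [Nontrivial A]

lemma le_smul_one_iff_mspec_le (hc : IsSelfAdjoint c) (r : ℝ) :
    c ≤ r • (1 : A) ↔ Mspec c ≤ r := by
  rw [← Algebra.algebraMap_eq_smul_one, le_algebraMap_iff_spectrum_le hc]
  exact ⟨fun h => csSup_le (ContinuousFunctionalCalculus.spectrum_nonempty c hc) h,
    fun h _ ht => (le_mspec_of_mem_spectrum ht).trans h⟩

lemma cstarLT_smul_one_iff (hc : IsSelfAdjoint c) (b : ℝ) :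
    CstarLT c (b • (1 : A)) ↔ Mspec c < b := by
  rw [CstarLT, le_smul_one_iff_mspec_le hc, isUnit_smul_one_sub_iff]
  constructor
  · rintro ⟨hle, hb⟩
    exact hle.lt_of_ne fun h => hb (h ▸ mspec_mem_spectrum hc)
  · exact fun h => ⟨h.le, fun hb => (le_mspec_of_mem_spectrum hb).not_gt h⟩

lemma smul_one_cstarLT_iff (hc : IsSelfAdjoint c) (a : ℝ) :
    CstarLT (a • (1 : A)) c ↔ Mspec (-c) < -a := by
  rw [← cstarLT_smul_one_iff hc.neg, CstarLT, CstarLT, neg_smul, neg_le_neg_iff,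
    neg_sub_neg]

lemma mspec_le_mspec_add_norm_sub (hc : IsSelfAdjoint c) (hd : IsSelfAdjoint d) :
    Mspec c ≤ Mspec d + ‖c - d‖ := by
  have hcd : c - d ≤ ‖c - d‖ • (1 : A) :=
    (le_smul_one_iff_mspec_le (hc.sub hd) _).mpr <|
      csSup_le (ContinuousFunctionalCalculus.spectrum_nonempty _ (hc.sub hd)) fun _ ht =>
        (Real.le_norm_self _).trans (spectrum.norm_le_norm_of_mem ht)
  have hd' : d ≤ Mspec d • (1 : A) := (le_smul_one_iff_mspec_le hd _).mpr le_rfl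
  rw [← le_smul_one_iff_mspec_le hc, add_smul]
  calc c = d + (c - d) := (add_sub_cancel d c).symm
    _ ≤ Mspec d • (1 : A) + ‖c - d‖ • (1 : A) := add_le_add hd' hcd

lemma lipschitzOnWith_mspec : LipschitzOnWith 1 (Mspec : A → ℝ) {c | IsSelfAdjoint c} :=
  LipschitzOnWith.of_dist_le_mul fun c hc d hd => by
    have hdc := mspec_le_mspec_add_norm_sub hd hc
    rw [norm_sub_rev] at hdc
    rw [NNReal.coe_one, one_mul, Real.dist_eq, dist_eq_norm, abs_sub_le_iff]
    constructor <;> linarith [mspec_le_mspec_add_norm_sub hc hd]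

end Spectrum

lemma realPart_mem {B S : Type*} [AddCommGroup B] [Module ℂ B] [StarAddMonoid B]
    [StarModule ℂ B] [SetLike S B] [AddSubmonoidClass S B] [SMulMemClass S ℂ B]
    [StarMemClass S B] {s : S} {b : B} (hb : b ∈ s) : (ℜ b : B) ∈ s := by
  rw [realPart_apply_coe, ← Complex.coe_smul]
  exact SMulMemClass.smul_mem _ (add_mem hb (star_mem hb))

lemma Setoid.preimage_image_mk_eq {R : Setoid X} {U : Set X}
    (hU : ∀ x y, R x y → x ∈ U → y ∈ U) : Quotient.mk R ⁻¹' (Quotient.mk R '' U) = U :=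
  (Set.subset_preimage_image _ _).antisymm' fun _ ⟨u, hu, hux⟩ => hU u _ (Quotient.exact hux) hu

section ContinuousMap

variable [TopologicalSpace X]

lemma ContinuousMap.isSelfAdjoint_apply [TopologicalSpace A] [Star A] [ContinuousStar A]
    {g : C(X, A)} (hg : IsSelfAdjoint g) (x : X) :
    IsSelfAdjoint (g x) :=
  congr($hg x)

variable [CStarAlgebra A]

lemma ContinuousMap.realPart_apply (g : C(X, A)) (x : X) : (ℜ g : C(X, A)) x = ℜ (g x) := by
  simp [realPart_apply_coe]

variable [PartialOrder A] [StarOrderedRing A] [Nontrivial A]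

lemma continuous_mspec_apply {g : C(X, A)} (hg : IsSelfAdjoint g) :
    Continuous fun x => Mspec (g x) :=
  lipschitzOnWith_mspec.continuousOn.comp_continuous g.continuous
    (ContinuousMap.isSelfAdjoint_apply hg)

lemma setOf_strict_bounds_eq {f : C(X, A)} (hf : IsSelfAdjoint f) (a b : ℝ) :
    {x | CstarLT (a • (1 : A)) (f x) ∧ CstarLT (f x) (b • (1 : A))} =
      {x | Mspec ((-f) x) < -a ∧ Mspec (f x) < b} :=
  Set.ext fun x => and_congr (smul_one_cstarLT_iff (ContinuousMap.isSelfAdjoint_apply hf x) a)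
    (cstarLT_smul_one_iff (ContinuousMap.isSelfAdjoint_apply hf x) b)

lemma continuous_mspec_realPart_eval (x : X) :
    Continuous fun g : C(X, A) => Mspec (ℜ (g x) : A) := by
  refine lipschitzOnWith_mspec.continuousOn.comp_continuous ?_ fun g => (ℜ (g x)).2
  simp only [realPart_apply_coe]
  fun_prop

/-- Replacing `f` by its real part, which maps `E` into itself and fixes selfadjoint elements,
makes both sides continuous in `f` on all of `C(X, A)`. -/
lemma mspec_apply_eq_of_mem_closure {E : NonUnitalStarSubalgebra ℂ C(X, A)} {x y : X}
    (hE : ∀ g ∈ E, IsSelfAdjoint g → Mspec (g x) = Mspec (g y))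
    {f : C(X, A)} (hf : f ∈ closure (E : Set C(X, A))) (hfsa : IsSelfAdjoint f) :
    Mspec (f x) = Mspec (f y) := by
  have hE' : ∀ g ∈ E, Mspec (ℜ (g x) : A) = Mspec (ℜ (g y) : A) := fun g hg => by
    simpa only [ContinuousMap.realPart_apply] using hE _ (realPart_mem hg) (ℜ g).2
  have hf' : Mspec (ℜ (f x) : A) = Mspec (ℜ (f y) : A) :=
    closure_minimal hE'
      (isClosed_eq (continuous_mspec_realPart_eval x) (continuous_mspec_realPart_eval y)) hf
  rwa [(ContinuousMap.isSelfAdjoint_apply hfsa x).coe_realPart,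
    (ContinuousMap.isSelfAdjoint_apply hfsa y).coe_realPart] at hf'

end ContinuousMap

theorem saturated_and_isOpen_image_of_strict_bounds_general
    [TopologicalSpace X] [CStarAlgebra A]
    [PartialOrder A] [StarOrderedRing A]
    (E : NonUnitalStarSubalgebra ℂ C(X, A))
    (R : Setoid X)
    (hM : ∀ x y : X, R.r x y → ∀ f ∈ E, IsSelfAdjoint f → Mspec (f x) = Mspec (f y))
    (f : C(X, A)) (hf : f ∈ closure (E : Set C(X, A))) (hfsa : IsSelfAdjoint f)
    (a b : ℝ)
    (U : Set X) (hU : U = {x : X | CstarLT (a • (1 : A)) (f x) ∧ CstarLT (f x) (b • (1 : A))}) :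
    Quotient.mk R ⁻¹' (Quotient.mk R '' U) = U ∧ IsOpen (Quotient.mk R '' U) := by
  obtain ⟨hsat, hopen⟩ : (∀ x y, R x y → x ∈ U → y ∈ U) ∧ IsOpen U := by
    rcases subsingleton_or_nontrivial A with hA | hA
    · -- in the zero algebra every spectrum is empty and `Mspec` is the junk value `0`
      have hUuniv : U = Set.univ := hU ▸ Set.eq_univ_of_forall fun _ =>
        ⟨⟨(Subsingleton.elim _ _).le, isUnit_of_subsingleton _⟩,
          ⟨(Subsingleton.elim _ _).le, isUnit_of_subsingleton _⟩⟩
      simp [hUuniv]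
    rw [hU, setOf_strict_bounds_eq hfsa]
    have hnegf : -f ∈ closure (E : Set C(X, A)) :=
      map_mem_closure continuous_neg hf fun _ => neg_mem
    refine ⟨fun x y hxy hx => ?_, ?_⟩
    · rwa [Set.mem_ofPred_eq, ← mspec_apply_eq_of_mem_closure (hM x y hxy) hf hfsa,
        ← mspec_apply_eq_of_mem_closure (hM x y hxy) hnegf hfsa.neg]
    · exact (isOpen_lt (continuous_mspec_apply hfsa.neg) continuous_const).inter
        (isOpen_lt (continuous_mspec_apply hfsa) continuous_const)
  have hpreimage := Setoid.preimage_image_mk_eq hsat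
  exact ⟨hpreimage, (isOpen_coinduced (f := Quotient.mk R)).mpr (by rwa [hpreimage])⟩

/-- Lemma 2.10: if `M(f(x)) = M(f(y))` for all selfadjoint `f ∈ E` whenever `(x, y) ∈ R`
(`R` a closed equivalence relation), then for selfadjoint `f` in the closure of `E` and real
`a < b` the set `U = {x : a·1 < f x < b·1}` is saturated (`π⁻¹(π(U)) = U`) and `π(U)` is open
in `X / R`. -/
theorem saturated_and_isOpen_image_of_strict_bounds
    [TopologicalSpace X] [CompactSpace X] [T2Space X] [CStarAlgebra A]
    [PartialOrder A] [StarOrderedRing A]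
    (E : NonUnitalStarSubalgebra ℂ C(X, A))
    (R : Setoid X) (hRclosed : IsClosed {p : X × X | R.r p.1 p.2})
    (hM : ∀ x y : X, R.r x y → ∀ f ∈ E, IsSelfAdjoint f → Mspec (f x) = Mspec (f y))
    (f : C(X, A)) (hf : f ∈ closure (E : Set C(X, A))) (hfsa : IsSelfAdjoint f)
    (a b : ℝ)
    (U : Set X) (hU : U = {x : X | CstarLT (a • (1 : A)) (f x) ∧ CstarLT (f x) (b • (1 : A))}) :
    Quotient.mk R ⁻¹' (Quotient.mk R '' U) = U ∧ IsOpen (Quotient.mk R '' U) :=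
  saturated_and_isOpen_image_of_strict_bounds_general E R hM f hf hfsa a b U hU
end
end

section
/- Let (X,.) be an n-space and let A ⊆ X be a closed invariant nonempty subset (so that (A,.) is an n-space with the restricted action). Then every map g ∈ C*(A,.) extends to a map g̃ ∈ C*(X,.) such that sup_{a ∈ A} ‖g(a)‖ = sup_{x ∈ X} ‖g̃(x)‖. -/
open scoped ZeroAtInfty Matrix.Norms.L2Operator

noncomputable section

/-- The C*-algebra of complex `n × n` matrices (with the operator norm). -/
abbrev MatC (n : ℕ) : Type := Matrix (Fin n) (Fin n) ℂ

/-- The unitary group `𝒰ₙ` of complex `n × n` matrices. -/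
abbrev UG (n : ℕ) := Matrix.unitaryGroup (Fin n) ℂ

/-- Conjugation action of the unitary group on `n × n` matrices: `𝔲.A = U * A * U⁻¹`.
Central (i.e. scalar) unitaries act trivially, so this also encodes the action of
`Uₙ = 𝒰ₙ / Z(𝒰ₙ)` on `Mₙ`. -/
def uConj {n : ℕ} (U : UG n) (A : MatC n) : MatC n :=
  (U : MatC n) * A * (star U : MatC n)

/-- `(X, •)` is an `n`-space: a locally compact Hausdorff space with a continuous free action
of `Uₙ = 𝒰ₙ / Z(𝒰ₙ)`, encoded as a continuous action of the unitary group `𝒰ₙ` in which the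
center `Z(𝒰ₙ) = 𝕋·I` acts trivially and every point stabilizer is exactly the center. -/
def IsNSpace (n : ℕ) (X : Type*) [TopologicalSpace X] [MulAction (UG n) X] : Prop :=
  T2Space X ∧ LocallyCompactSpace X ∧
  Continuous (fun p : UG n × X => p.1 • p.2) ∧
  (∀ U ∈ Subgroup.center (UG n), ∀ x : X, U • x = x) ∧
  (∀ (U : UG n) (x : X), U • x = x → U ∈ Subgroup.center (UG n))

/-- The C*-algebra `C*(X, •)` of all continuous equivariant maps `X → Mₙ` vanishing at
infinity, as a (non-unital) star subalgebra of `C₀(X, Mₙ)`. -/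
def CstarN (n : ℕ) (X : Type*) [TopologicalSpace X] [MulAction (UG n) X] :
    NonUnitalStarSubalgebra ℂ C₀(X, MatC n) where
  carrier := {f | ∀ (U : UG n) (x : X), f (U • x) = uConj U (f x)}
  add_mem' := by
    intro f g hf hg U x
    simp only [ZeroAtInftyContinuousMap.coe_add, Pi.add_apply, hf U x, hg U x, uConj,
      Matrix.mul_add, Matrix.add_mul]
  zero_mem' := by
    intro U x
    simp [uConj]
  mul_mem' := by
    intro f g hf hg U x
    have h1 : (star U : MatC n) * (U : MatC n) = 1 := Matrix.UnitaryGroup.star_mul_self U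
    simp only [ZeroAtInftyContinuousMap.coe_mul, Pi.mul_apply, hf U x, hg U x, uConj]
    calc (U : MatC n) * f x * (star U : MatC n) * ((U : MatC n) * g x * (star U : MatC n))
        = (U : MatC n) * f x * ((star U : MatC n) * (U : MatC n)) * g x * (star U : MatC n) := by
          noncomm_ring
      _ = (U : MatC n) * (f x * g x) * (star U : MatC n) := by rw [h1]; noncomm_ring
  smul_mem' := by
    intro c f hf U x
    simp only [ZeroAtInftyContinuousMap.coe_smul, Pi.smul_apply, hf U x, uConj,
      Matrix.smul_mul, Matrix.mul_smul]
  star_mem' := by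
    intro f hf U x
    simp only [ZeroAtInftyContinuousMap.coe_star, Pi.star_apply, hf U x, uConj, star_mul,
      star_star]
    noncomm_ring

/-! By Tietze's theorem, applied on the one-point compactification of `A` with `∞ ↦ 0`, `g`
extends to a map `f` vanishing at infinity with values in the closed ball of radius
`r = ⨆ a, ‖g a‖`. Averaging `f` over the compact group with Haar measure,
`x ↦ ∫ U f(U⁻¹x) U* dU`, gives an equivariant map which still vanishes at infinity
(the saturation of a compact set is compact) and is still bounded by `r`, since conjugation is
isometric. On `A` the average does not change `f`, because there `f = g` is already
equivariant. -/

namespace Unitary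

variable {R : Type*} [NormedRing R] [StarRing R] [CStarRing R]

lemma norm_coe_eq_norm_one (U : unitary R) : ‖(U : R)‖ = ‖(1 : R)‖ := by
  simpa using CStarRing.norm_coe_unitary_mul U 1

instance [ProperSpace R] : CompactSpace (unitary R) :=
  isCompact_iff_compactSpace.mp <| Metric.isCompact_of_isClosed_isBounded isClosed_unitary <|
    isBounded_iff_forall_norm_le.mpr ⟨‖(1 : R)‖, fun _ hU => (norm_coe_eq_norm_one ⟨_, hU⟩).le⟩

variable (S : Type*) [CommSemiring S] [Algebra S R]

def conjLinearIsometry : unitary R →* (R ≃ₗᵢ[S] R) where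
  toFun U :=
    { (conjStarAlgAut S R U).toAlgEquiv.toLinearEquiv with
      norm_map' := fun x => by
        change ‖(U : R) * x * star (U : R)‖ = ‖x‖
        rw [mul_assoc, CStarRing.norm_coe_unitary_mul, ← coe_star,
          CStarRing.norm_mul_coe_unitary] }
  map_one' := by ext; simp
  map_mul' U V := by ext; simp [mul_assoc]

lemma conjLinearIsometry_apply (U : unitary R) (x : R) :
    conjLinearIsometry S U x = U * x * star (U : R) := rfl

lemma continuous_conjLinearIsometry :
    Continuous fun p : unitary R × R => conjLinearIsometry S p.1 p.2 := by
  simp only [conjLinearIsometry_apply]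
  fun_prop

end Unitary

section Extension

open Filter Topology Metric

variable {X : Type*} [TopologicalSpace X]

lemma OnePoint.isClosedEmbedding_map_subtypeVal [T2Space X] [LocallyCompactSpace X] {A : Set X}
    (hA : IsClosed A) : IsClosedEmbedding (OnePoint.map ((↑) : A → X)) := by
  refine Continuous.isClosedEmbedding ?_ (Option.map_injective Subtype.val_injective)
  refine OnePoint.continuous_map continuous_subtype_val ?_
  rw [coclosedCompact_eq_cocompact, coclosedCompact_eq_cocompact]
  exact hA.isClosedEmbedding_subtypeVal.tendsto_cocompact

theorem exists_zeroAtInfty_extension_norm_le [T2Space X] [LocallyCompactSpace X]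
    {E : Type*} [NormedAddCommGroup E] [NormedSpace ℝ E] [FiniteDimensional ℝ E]
    {A : Set X} (hA : IsClosed A) (g : C(A, E)) (hg : Tendsto g (cocompact A) (𝓝 0))
    {r : ℝ} (hr : 0 ≤ r) (hgr : ∀ a, ‖g a‖ ≤ r) :
    ∃ f : C₀(X, E), (∀ a : A, f a = g a) ∧ ∀ x, ‖f x‖ ≤ r := by
  rcases hr.eq_or_lt with rfl | hr
  · exact ⟨0, fun a => (norm_le_zero_iff.mp (hgr a)).symm, by simp⟩
  have := instTietzeExtensionClosedBall ℝ (0 : E) hr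
  let g' : C(OnePoint A, E) :=
    OnePoint.continuousMapMk g 0 (by rwa [coclosedCompact_eq_cocompact])
  have hg' : ∀ p, g' p ∈ closedBall (0 : E) r := by
    rintro (_ | a)
    · exact mem_closedBall_self hr.le
    · exact mem_closedBall_zero_iff.mpr (hgr a)
  obtain ⟨F, hF_mem, hF⟩ :=
    g'.exists_extension_forall_mem (OnePoint.isClosedEmbedding_map_subtypeVal hA) hg'
  have hF_infty : F OnePoint.infty = 0 := by
    simpa [g', OnePoint.continuousMapMk] using congr($hF OnePoint.infty)
  have hF_tendsto := ((OnePoint.continuous_iff F).mp F.continuous).1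
  rw [coclosedCompact_eq_cocompact, hF_infty] at hF_tendsto
  refine ⟨⟨F.comp ⟨_, OnePoint.continuous_coe⟩, hF_tendsto⟩, fun a => ?_, fun x => ?_⟩
  · exact congr($hF a)
  · exact mem_closedBall_zero_iff.mp (hF_mem x)

end Extension

section Averaging

open MeasureTheory Filter Topology Metric
open scoped Pointwise

lemma ContinuousMap.continuous_integral {K E : Type*} [TopologicalSpace K] [CompactSpace K]
    [MeasurableSpace K] [OpensMeasurableSpace K] [NormedAddCommGroup E] [NormedSpace ℝ E]
    (μ : Measure K) [IsFiniteMeasure μ] : Continuous fun ψ : C(K, E) => ∫ u, ψ u ∂μ := by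
  refine (LipschitzWith.of_dist_le_mul (K := (μ.real Set.univ).toNNReal) fun ψ φ => ?_).continuous
  have hint : ∀ χ : C(K, E), Integrable χ μ := fun χ =>
    χ.continuous.integrable_of_hasCompactSupport (HasCompactSupport.of_compactSpace _)
  rw [dist_eq_norm, dist_eq_norm, ← integral_sub (hint ψ) (hint φ),
    Real.coe_toNNReal _ measureReal_nonneg, mul_comm]
  exact norm_integral_le_of_norm_le_const (ae_of_all _ fun u => (ψ - φ).norm_coe_le_norm u)

variable {G X E : Type*} [Group G] [MeasurableSpace G] [MulAction G X]
  [NormedAddCommGroup E] [NormedSpace ℝ E]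

def equivariantAverage (μ : Measure G) (ρ : G →* (E ≃ₗᵢ[ℝ] E)) (f : X → E) (x : X) : E :=
  ∫ g, ρ g (f (g⁻¹ • x)) ∂μ

variable (μ : Measure G) (ρ : G →* (E ≃ₗᵢ[ℝ] E)) {f : X → E}

lemma equivariantAverage_smul [MeasurableMul G] [μ.IsMulLeftInvariant] [CompleteSpace E]
    (f : X → E) (h : G) (x : X) :
    equivariantAverage μ ρ f (h • x) = ρ h (equivariantAverage μ ρ f x) := by
  rw [equivariantAverage, equivariantAverage, ← integral_mul_left_eq_self _ h]
  refine Eq.trans ?_ ((ρ h).toLinearIsometry.integral_comp_comm _)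
  congr 1 with g
  simp [mul_smul, LinearIsometryEquiv.coe_mul]

lemma equivariantAverage_apply_of_forall_smul [IsProbabilityMeasure μ] [CompleteSpace E] {x : X}
    (hx : ∀ g : G, f (g • x) = ρ g (f x)) : equivariantAverage μ ρ f x = f x := by
  have hconst : ∀ g : G, ρ g (f (g⁻¹ • x)) = f x := fun g => by
    rw [hx, map_inv]
    exact (ρ g).apply_symm_apply (f x)
  simp [equivariantAverage, hconst]

lemma norm_equivariantAverage_le [IsProbabilityMeasure μ] {x : X} {c : ℝ}
    (hc : ∀ g : G, ‖f (g • x)‖ ≤ c) : ‖equivariantAverage μ ρ f x‖ ≤ c := by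
  have hbound : ∀ g : G, ‖ρ g (f (g⁻¹ • x))‖ ≤ c := fun g => by simpa using hc g⁻¹
  simpa [equivariantAverage] using norm_integral_le_of_norm_le_const (ae_of_all μ hbound)

lemma continuous_equivariantAverage [TopologicalSpace G] [IsTopologicalGroup G] [CompactSpace G]
    [OpensMeasurableSpace G] [IsFiniteMeasure μ] [TopologicalSpace X] [ContinuousSMul G X]
    (hρ : Continuous fun p : G × E => ρ p.1 p.2) (hf : Continuous f) :
    Continuous (equivariantAverage μ ρ f) := by
  let F : C(X × G, E) := ⟨fun p => ρ p.2 (f (p.2⁻¹ • p.1)), by fun_prop⟩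
  exact (ContinuousMap.continuous_integral μ).comp F.curry.continuous

lemma tendsto_equivariantAverage_cocompact [IsProbabilityMeasure μ] [TopologicalSpace G]
    [CompactSpace G] [TopologicalSpace X] [ContinuousSMul G X]
    (hf : Tendsto f (cocompact X) (𝓝 0)) :
    Tendsto (equivariantAverage μ ρ f) (cocompact X) (𝓝 0) := by
  refine nhds_basis_closedBall.tendsto_right_iff.mpr fun ε hε => ?_
  obtain ⟨K, hK, hKf⟩ := hasBasis_cocompact.eventually_iff.mp
    (nhds_basis_closedBall.tendsto_right_iff.mp hf ε hε)
  refine hasBasis_cocompact.eventually_iff.mpr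
    ⟨(Set.univ : Set G) • K, isCompact_univ.smul_set hK, fun x hx => ?_⟩
  refine mem_closedBall_zero_iff.mpr (norm_equivariantAverage_le μ ρ fun g => ?_)
  refine mem_closedBall_zero_iff.mp (hKf fun hgx => hx ?_)
  exact Set.mem_smul.mpr ⟨g⁻¹, Set.mem_univ _, g • x, hgx, inv_smul_smul g x⟩

end Averaging

open MeasureTheory in
theorem exists_equivariant_zeroAtInfty_average {G X E : Type*} [Group G] [TopologicalSpace G]
    [IsTopologicalGroup G] [CompactSpace G] [TopologicalSpace X] [MulAction G X]
    [ContinuousSMul G X] [NormedAddCommGroup E] [NormedSpace ℝ E] [CompleteSpace E]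
    (ρ : G →* (E ≃ₗᵢ[ℝ] E)) (hρ : Continuous fun p : G × E => ρ p.1 p.2) (f : C₀(X, E)) :
    ∃ F : C₀(X, E), (∀ (g : G) (x : X), F (g • x) = ρ g (F x)) ∧
      (∀ x, (∀ g : G, f (g • x) = ρ g (f x)) → F x = f x) ∧
      ∀ x c, (∀ g : G, ‖f (g • x)‖ ≤ c) → ‖F x‖ ≤ c := by
  borelize G
  let μ := Measure.haarMeasure (⊤ : TopologicalSpace.PositiveCompacts G)
  have : IsProbabilityMeasure μ := ⟨Measure.haarMeasure_self⟩
  exact ⟨⟨⟨equivariantAverage μ ρ f, continuous_equivariantAverage μ ρ hρ f.continuous⟩,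
      tendsto_equivariantAverage_cocompact μ ρ f.zero_at_infty'⟩,
    equivariantAverage_smul μ ρ f, fun _ => equivariantAverage_apply_of_forall_smul μ ρ,
    fun _ _ => norm_equivariantAverage_le μ ρ⟩

lemma iSup_norm_eq_iSup_norm_of_extension {X E : Type*} [SeminormedAddGroup E] {A : Set X}
    {g : A → E} {f : X → E} (hfg : ∀ a : A, f a = g a) (hf : ∀ x, ‖f x‖ ≤ ⨆ a, ‖g a‖) :
    ⨆ a, ‖g a‖ = ⨆ x, ‖f x‖ := by
  refine le_antisymm (Real.iSup_le (fun a => ?_) (Real.iSup_nonneg fun x => norm_nonneg (f x)))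
    (Real.iSup_le hf (Real.iSup_nonneg fun a => norm_nonneg (g a)))
  rw [← hfg a]
  exact le_ciSup ⟨_, Set.forall_mem_range.mpr hf⟩ (a : X)

theorem exists_equivariant_extension_general
    {n : ℕ} {X : Type*} [TopologicalSpace X] [MulAction (UG n) X] (hX : IsNSpace n X)
    (A : Set X) (hAclosed : IsClosed A)
    (hAinv : ∀ (U : UG n) (a : X), a ∈ A → U • a ∈ A)
    (g : C(A, MatC n))
    (hg0 : Filter.Tendsto g (Filter.cocompact A) (nhds 0))
    (hgeq : ∀ (U : UG n) (a : A), g ⟨U • (a : X), hAinv U a a.2⟩ = uConj U (g a)) :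
    ∃ gt : C₀(X, MatC n), gt ∈ CstarN n X ∧ (∀ a : A, gt (a : X) = g a) ∧
      (⨆ a : A, ‖g a‖) = ⨆ x : X, ‖gt x‖ := by
  obtain ⟨_, _, hact, -, -⟩ := hX
  have : ContinuousSMul (UG n) X := ⟨hact⟩
  have hg_bdd : BddAbove (Set.range fun a => ‖g a‖) :=
    (ZeroAtInftyContinuousMap.toBCF ⟨g, hg0⟩).bddAbove_range_norm_comp
  obtain ⟨f, hf_ext, hf_le⟩ := exists_zeroAtInfty_extension_norm_le hAclosed g hg0
    (Real.iSup_nonneg fun a => norm_nonneg (g a)) (le_ciSup hg_bdd)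
  obtain ⟨gt, hgt_equiv, hgt_fix, hgt_le⟩ := exists_equivariant_zeroAtInfty_average (G := UG n)
    (Unitary.conjLinearIsometry ℝ) (Unitary.continuous_conjLinearIsometry ℝ) f
  have hf_equiv : ∀ (a : A) (U : UG n), f (U • (a : X)) = uConj U (f a) := fun a U => by
    rw [hf_ext ⟨_, hAinv U a a.2⟩, hf_ext, hgeq]
  have hgt_ext : ∀ a : A, gt a = g a := fun a => by
    rw [hgt_fix a (hf_equiv a), hf_ext]
  exact ⟨gt, hgt_equiv, hgt_ext, iSup_norm_eq_iSup_norm_of_extension hgt_ext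
    fun x => hgt_le x _ fun U => hf_le _⟩

/-- Lemma 3.2(c): every `g ∈ C*(A, •)` on a closed invariant nonempty subset `A` of an
`n`-space `X` extends to some `g̃ ∈ C*(X, •)` with the same sup-norm. -/
theorem exists_equivariant_extension
    {n : ℕ} {X : Type*} [TopologicalSpace X] [MulAction (UG n) X] (hX : IsNSpace n X)
    (A : Set X) (hAclosed : IsClosed A) (hAne : A.Nonempty)
    (hAinv : ∀ (U : UG n) (a : X), a ∈ A → U • a ∈ A)
    (g : C(A, MatC n))
    (hg0 : Filter.Tendsto g (Filter.cocompact A) (nhds 0))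
    (hgeq : ∀ (U : UG n) (a : A), g ⟨U • (a : X), hAinv U a a.2⟩ = uConj U (g a)) :
    ∃ gt : C₀(X, MatC n), gt ∈ CstarN n X ∧ (∀ a : A, gt (a : X) = g a) ∧
      (⨆ a : A, ‖g a‖) = ⨆ x : X, ‖gt x‖ :=
  exists_equivariant_extension_general hX A hAclosed hAinv g hg0 hgeq

end
end

section
/- Let A be a unital C*-algebra and x₁, …, x_k ∈ A. If the unital C*-subalgebra C*₁(x₁, …, x_k) generated by x₁, …, x_k together with the unit of A is n-homogeneous for some n > 1, then C*₁(x₁, …, x_k) = C*(x₁, …, x_k), the C*-subalgebra generated by x₁, …, x_k alone. -/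
/-!
The closure `B` of the unital *-algebra generated by the `xᵢ` is `C + ℂ·1`, where `C` is the
closure of the non-unital one: a closed subspace plus a line is closed. If `1 ∉ C`, then `B` is
the unitization of `C`, and its canonical character `c + λ·1 ↦ λ` is a one-dimensional
irreducible representation of `B`, which an `n`-homogeneous algebra with `n > 1` cannot have.
Hence `1 ∈ C` and `B = C`.
-/

noncomputable section

universe u

/-- A C*-algebra `A` is `n`-homogeneous if every nonzero irreducible representation of `A`
(on a Hilbert space) acts on an `n`-dimensional Hilbert space. -/
def IsNHomogeneous (n : ℕ) (A : Type u) [NonUnitalNonAssocSemiring A] [Module ℂ A] [Star A] :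
    Prop :=
  ∀ (H : Type u) (_ : NormedAddCommGroup H) (_ : InnerProductSpace ℂ H) (_ : CompleteSpace H)
    (π : A →⋆ₙₐ[ℂ] (H →L[ℂ] H)),
    (∃ a, π a ≠ 0) →
    (∀ S : Submodule ℂ H, IsClosed (S : Set H) →
      (∀ (a : A), ∀ v ∈ S, π a v ∈ S) → S = ⊥ ∨ S = ⊤) →
    Module.finrank ℂ H = n

namespace Unitization

variable (R A : Type*) [CommSemiring R] [StarRing R] [NonUnitalSemiring A] [StarRing A]
  [Module R A] [SMulCommClass R A A] [IsScalarTower R A A] [StarModule R A]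

def fstStarAlgHom : Unitization R A →⋆ₐ[R] R :=
  { fstHom R A with map_star' := fst_star }

end Unitization

namespace StarAlgebra

section Algebraic

variable {R A : Type*} [Field R] [StarRing R] [Ring A] [StarRing A] [Algebra R A]
  [StarModule R A]

theorem mem_adjoin_nonUnitalStarSubalgebra_iff {S : NonUnitalStarSubalgebra R A} {a : A} :
    a ∈ adjoin R (S : Set A) ↔ ∃ r : R, ∃ s ∈ S, algebraMap R A r + s = a := by
  rw [← NonUnitalStarSubalgebra.unitization_range]
  constructor
  · rintro ⟨u, rfl⟩
    exact ⟨u.fst, u.snd, u.snd.2, rfl⟩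
  · rintro ⟨r, s, hs, rfl⟩
    exact ⟨Unitization.inl r + ((⟨s, hs⟩ : S) : Unitization R S), by simp⟩

theorem adjoin_nonUnitalStarSubalgebra_toSubmodule (S : NonUnitalStarSubalgebra R A) :
    Subalgebra.toSubmodule (adjoin R (S : Set A)).toSubalgebra
      = S.toNonUnitalSubalgebra.toSubmodule ⊔ Submodule.span R {1} := by
  ext a
  simp only [Submodule.mem_sup, Submodule.mem_span_singleton, Subalgebra.mem_toSubmodule,
    StarSubalgebra.mem_toSubalgebra, mem_adjoin_nonUnitalStarSubalgebra_iff,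
    NonUnitalSubalgebra.mem_toSubmodule, NonUnitalStarSubalgebra.mem_toNonUnitalSubalgebra,
    Algebra.algebraMap_eq_smul_one]
  constructor
  · rintro ⟨r, s, hs, rfl⟩
    exact ⟨s, hs, r • 1, ⟨r, rfl⟩, add_comm _ _⟩
  · rintro ⟨s, hs, _, ⟨r, rfl⟩, rfl⟩
    exact ⟨r, s, hs, add_comm _ _⟩

end Algebraic

section Topological

variable {𝕜 A : Type*} [NontriviallyNormedField 𝕜] [CompleteSpace 𝕜] [StarRing 𝕜]
  [Ring A] [StarRing A] [Algebra 𝕜 A] [StarModule 𝕜 A] [TopologicalSpace A]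

theorem isClosed_adjoin_nonUnitalStarSubalgebra [IsTopologicalAddGroup A] [ContinuousSMul 𝕜 A]
    {S : NonUnitalStarSubalgebra 𝕜 A} (hS : IsClosed (S : Set A)) :
    IsClosed (adjoin 𝕜 (S : Set A) : Set A) := by
  have := Submodule.isClosed_sup_finiteDimensional S.toNonUnitalSubalgebra.toSubmodule
    (Submodule.span 𝕜 {(1 : A)}) hS
  rwa [← adjoin_nonUnitalStarSubalgebra_toSubmodule] at this

theorem topologicalClosure_adjoin_eq_adjoin_topologicalClosure [IsTopologicalRing A]
    [ContinuousSMul 𝕜 A] [ContinuousStar A] (s : Set A) :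
    (adjoin 𝕜 s).topologicalClosure
      = adjoin 𝕜 ((NonUnitalStarAlgebra.adjoin 𝕜 s).topologicalClosure : Set A) := by
  refine le_antisymm (StarSubalgebra.topologicalClosure_minimal ?_ ?_) (adjoin_le ?_)
  · rw [← adjoin_nonUnitalStarSubalgebra]
    exact adjoin_mono (NonUnitalStarSubalgebra.le_topologicalClosure _)
  · exact isClosed_adjoin_nonUnitalStarSubalgebra
      (NonUnitalStarSubalgebra.isClosed_topologicalClosure _)
  · exact closure_mono (NonUnitalStarAlgebra.adjoin_le_starAlgebra_adjoin 𝕜 s)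

end Topological

end StarAlgebra

theorem IsNHomogeneous.eq_one_of_starAlgHom {n : ℕ} {B : Type u} [Ring B] [StarRing B]
    [Algebra ℂ B]
    (hB : IsNHomogeneous n B) (χ : B →⋆ₐ[ℂ] ℂ) : n = 1 := by
  -- `ULift` puts a one-dimensional Hilbert space in the universe of `B`.
  let H := EuclideanSpace ℂ (ULift.{u} (Fin 1))
  have hH : Module.finrank ℂ H = 1 := by simp [H]
  have : Nontrivial H := Module.nontrivial_of_finrank_eq_succ hH
  let π : B →⋆ₙₐ[ℂ] (H →L[ℂ] H) :=
    ((StarAlgHom.ofId ℂ (H →L[ℂ] H)).comp χ).toNonUnitalStarAlgHom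
  have hπ : ∀ b, π b = algebraMap ℂ (H →L[ℂ] H) (χ b) := fun _ => rfl
  rw [← hH]
  refine (hB H _ _ _ π ⟨1, by simp [hπ]⟩ fun S _ _ => ?_).symm
  have := is_simple_module_of_finrank_eq_one (A := ℂ) hH
  exact IsSimpleOrder.eq_bot_or_eq_top S

/-- Lemma 6.1: if the unital C*-subalgebra `C*₁(x₁, …, x_k)` generated by `x₁, …, x_k`
together with the unit of `A` is `n`-homogeneous for some `n > 1`, then it coincides with
the (non-unital) C*-subalgebra `C*(x₁, …, x_k)` generated by `x₁, …, x_k` alone. -/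
theorem unital_cstar_adjoin_eq_cstar_adjoin_of_isNHomogeneous
    {n : ℕ} (hn : 1 < n) (A : Type u) [CStarAlgebra A] {k : ℕ} (x : Fin k → A)
    (hhom : IsNHomogeneous n
      ((StarAlgebra.adjoin ℂ (Set.range x)).topologicalClosure : StarSubalgebra ℂ A)) :
    ((StarAlgebra.adjoin ℂ (Set.range x)).topologicalClosure : Set A)
      = closure ((NonUnitalStarAlgebra.adjoin ℂ (Set.range x) :
          NonUnitalStarSubalgebra ℂ A) : Set A) := by
  set C := (NonUnitalStarAlgebra.adjoin ℂ (Set.range x)).topologicalClosure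
  rw [StarAlgebra.topologicalClosure_adjoin_eq_adjoin_topologicalClosure] at hhom ⊢
  change _ = (C : Set A)
  by_cases h1 : (1 : A) ∈ C
  · exact congrArg SetLike.coe (StarAlgebra.adjoin_eq (C.toStarSubalgebra h1))
  · exact absurd (hhom.eq_one_of_starAlgHom <| (Unitization.fstStarAlgHom ℂ C).comp
      (NonUnitalStarSubalgebra.unitizationStarAlgEquiv C h1).symm.toStarAlgHom) hn.ne'

end
end
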